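/- For x ∈ H²(𝔻)^⊥ (the orthogonal complement of the Hardy space in L²(𝕋)) and ξ ∈ 𝔻, the projection of x·K_ξ onto H²(𝔻) equals x̃(ξ)·K_ξ, where x̃ is the Poisson extension of x; that is, P_{H²(𝔻)}(x K_ξ) = x̃(ξ) K_ξ. -/

import Mathlib

open MeasureTheory Complex Filter Topology
open scoped ENNReal NNReal

noncomputable section

namespace HardyPolydisc

/-- The `n`-torus `𝕋ⁿ`, realized as the product of `n` unit additive circles,
carrying the (normalized) Haar probability measure `volume`. -/
abbrev Torus (n : ℕ) := Fin n → AddCircle (1 : ℝ)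

/-- The normalized Lebesgue (Haar) measure `m_n` on the `n`-torus. -/
abbrev torusMeasure (n : ℕ) : Measure (Torus n) := volume

/-- A point of the additive circle viewed as a complex number of modulus one. -/
def bpt (t : AddCircle (1 : ℝ)) : ℂ := (AddCircle.toCircle t : ℂ)

/-- `L²(𝕋ⁿ)`. -/
abbrev L2T (n : ℕ) := Lp ℂ 2 (torusMeasure n)

/-- The analytic monomial `e_k(ζ) = ζ₁^{k₁} ⋯ ζₙ^{kₙ}` for `k ∈ ℤ₊ⁿ`. -/
def mon {n : ℕ} (k : Fin n → ℕ) : Torus n → ℂ := fun ζ => ∏ j, bpt (ζ j) ^ (k j)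

lemma mon_memℒp {n : ℕ} (k : Fin n → ℕ) : MemLp (mon k) 2 (torusMeasure n) := by
  have hc : Continuous (mon (n := n) k) := by
    apply continuous_finset_prod
    intro j _
    exact ((continuous_subtype_val.comp AddCircle.continuous_toCircle).comp
      (continuous_apply j)).pow _
  refine MemLp.of_bound hc.aestronglyMeasurable 1 ?_
  filter_upwards with ζ
  have h : ‖mon k ζ‖ = ∏ j, ‖bpt (ζ j)‖ ^ (k j) := by simp [mon]
  rw [h]
  have h1 : ∀ j : Fin n, ‖bpt (ζ j)‖ = 1 := by
    intro j; simp [bpt]; first | exact Circle.norm_coe _ | exact Circle.abs_coe _ | simp [Circle.norm_coe] | exact norm_toCircle _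
  simp [h1]

/-- The Hardy space `H²(𝔻ⁿ)`, identified (via radial boundary values) with the closed
subspace of `L²(𝕋ⁿ)` spanned by the analytic monomials. -/
def hardy (n : ℕ) : Submodule ℂ (L2T n) :=
  (Submodule.span ℂ
    (Set.range fun k : Fin n → ℕ => (mon_memℒp k).toLp (mon k))).topologicalClosure

instance (n : ℕ) : CompleteSpace (hardy n) :=
  IsClosed.completeSpace_coe (hs := Submodule.isClosed_topologicalClosure _)

/-- Multiplication by a bounded measurable symbol `φ ∈ L^∞(𝕋ⁿ)`, as a bounded operator
on `L²(𝕋ⁿ)`. -/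
def mulOp {n : ℕ} {φ : Torus n → ℂ} (hφ : MemLp φ ⊤ (torusMeasure n)) :
    L2T n →L[ℂ] L2T n :=
  LinearMap.mkContinuous
    { toFun := fun f => ((Lp.memLp f).smul (r := 2) hφ).toLp (φ • ⇑f)
      map_add' := by
        intro f g
        refine (MemLp.toLp_congr _ (((Lp.memLp f).smul (r := 2) hφ).add
          (((Lp.memLp g).smul (r := 2) hφ))) ?_).trans (MemLp.toLp_add _ _)
        filter_upwards [Lp.coeFn_add f g] with x hx
        simp only [Pi.smul_apply, Pi.mul_apply, Pi.add_apply, smul_eq_mul, hx]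
        ring
      map_smul' := by
        intro c f
        have key : MemLp.toLp (φ • ⇑(c • f)) ((Lp.memLp (c • f)).smul (r := 2) hφ)
            = c • MemLp.toLp (φ • ⇑f) ((Lp.memLp f).smul (r := 2) hφ) := by
          refine (MemLp.toLp_congr _ (((Lp.memLp f).smul (r := 2) hφ).const_smul c)
            ?_).trans (MemLp.toLp_const_smul c _)
          filter_upwards [Lp.coeFn_smul c f] with x hx
          simp only [Pi.smul_apply, Pi.mul_apply, smul_eq_mul, hx]
          ring
        simpa using key }
    (eLpNorm φ ⊤ (torusMeasure n)).toReal
    (by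
      intro f
      simp only [LinearMap.coe_mk, AddHom.coe_mk]
      rw [Lp.norm_toLp]
      have h := eLpNorm_smul_le_mul_eLpNorm (Lp.aestronglyMeasurable f) hφ.aestronglyMeasurable
        (p := ⊤) (q := 2) (r := 2)
      calc (eLpNorm (φ • ⇑f) 2 (torusMeasure n)).toReal
          ≤ ((eLpNorm φ ⊤ (torusMeasure n)) * eLpNorm (⇑f) 2 (torusMeasure n)).toReal := by
            apply ENNReal.toReal_mono _ h
            exact ENNReal.mul_ne_top hφ.eLpNorm_ne_top (Lp.memLp f).eLpNorm_ne_top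
        _ = (eLpNorm φ ⊤ (torusMeasure n)).toReal * ‖f‖ := by
            rw [ENNReal.toReal_mul, Lp.norm_def]
        )


/-- Complex conjugation preserves `ℒ^p` membership. -/
lemma memℒp_conj {α : Type*} [MeasurableSpace α] {μ : Measure α} {φ : α → ℂ} {p : ℝ≥0∞}
    (hφ : MemLp φ p μ) : MemLp (fun ζ => (starRingEnd ℂ) (φ ζ)) p μ := by
  have hm : AEStronglyMeasurable (fun ζ => (starRingEnd ℂ) (φ ζ)) μ :=
    Complex.continuous_conj.comp_aestronglyMeasurable hφ.aestronglyMeasurable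
  refine ⟨hm, ?_⟩
  have h : eLpNorm (starRingEnd ℂ ∘ φ) p μ = eLpNorm φ p μ := eLpNorm_conj (𝕜 := ℂ) φ p μ
  have h2 : (fun ζ => (starRingEnd ℂ) (φ ζ)) = starRingEnd ℂ ∘ φ := rfl
  rw [h2, h]
  exact hφ.2

/-- The product of two essentially bounded functions is essentially bounded. -/
lemma memℒp_top_mul {α : Type*} [MeasurableSpace α] {μ : Measure α} {φ ψ : α → ℂ}
    (hφ : MemLp φ ⊤ μ) (hψ : MemLp ψ ⊤ μ) : MemLp (fun ζ => φ ζ * ψ ζ) ⊤ μ := by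
  have := hψ.smul (φ := φ) (p := (⊤ : ℝ≥0∞)) (q := ⊤) (r := ⊤) hφ
  exact this

/-- The Toeplitz operator `T_φ = P_{H²} M_φ` on `H²(𝔻ⁿ)`. -/
def toeplitz {n : ℕ} {φ : Torus n → ℂ} (hφ : MemLp φ ⊤ (torusMeasure n)) :
    hardy n →L[ℂ] hardy n :=
  (Submodule.orthogonalProjectionOnto (hardy n)).comp ((mulOp hφ).comp (hardy n).subtypeL)

/-- The Hankel operator `H_φ = P_{H²⊥} M_φ : H²(𝔻ⁿ) → H²(𝔻ⁿ)^⊥`. -/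
def hankel {n : ℕ} {φ : Torus n → ℂ} (hφ : MemLp φ ⊤ (torusMeasure n)) :
    hardy n →L[ℂ] ↥(hardy n)ᗮ :=
  (Submodule.orthogonalProjectionOnto (hardy n)ᗮ).comp ((mulOp hφ).comp (hardy n).subtypeL)

/-- The Poisson kernel `P(ξ, ζ) = ∏ⱼ (1-|ξⱼ|²)/|1-ξⱼ conj(ζⱼ)|²` of the polydisc. -/
def poisson {n : ℕ} (ξ : Fin n → ℂ) (ζ : Torus n) : ℝ :=
  ∏ j, (1 - ‖ξ j‖ ^ 2) / ‖1 - ξ j * (starRingEnd ℂ) (bpt (ζ j))‖ ^ 2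

/-- The boundary values of the normalized Szegő kernel
`k_ξ(ζ) = ∏ⱼ √(1-|ξⱼ|²)/(1-conj(ξⱼ)ζⱼ)`. -/
def szego {n : ℕ} (ξ : Fin n → ℂ) : Torus n → ℂ := fun ζ =>
  ∏ j, (Real.sqrt (1 - ‖ξ j‖ ^ 2) : ℂ) / (1 - (starRingEnd ℂ) (ξ j) * bpt (ζ j))

/-- The normalized Szegő kernel as an element of `L²(𝕋ⁿ)` (defined to be `0` in the
degenerate case `ξ ∉ 𝔻ⁿ`, where its boundary values are not square-integrable). -/
def szegoLp {n : ℕ} (ξ : Fin n → ℂ) : L2T n :=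
  @dite _ (MemLp (szego ξ) 2 (torusMeasure n)) (Classical.dec _)
    (fun h => h.toLp (szego ξ)) (fun _ => 0)

/-- The Berezin transform `Ã(ξ) = ⟨A k_ξ, k_ξ⟩` of an operator on `H²(𝔻ⁿ)`
(using that `k_ξ ∈ H²(𝔻ⁿ)`, i.e. `P_{H²} k_ξ = k_ξ`). -/
def berezin {n : ℕ} (A : hardy n →L[ℂ] hardy n) (ξ : Fin n → ℂ) : ℂ :=
  inner (𝕜 := ℂ) (szegoLp ξ)
    ((A (Submodule.orthogonalProjectionOnto (hardy n) (szegoLp ξ)) : L2T n))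

/-- `F → φ` *radially*: for a.e. `ζ ∈ 𝕋ⁿ`, `F(rζ) → φ(ζ)` as `r → 1⁻`. -/
def RadialTo {n : ℕ} (F : (Fin n → ℂ) → ℂ) (φ : Torus n → ℂ) : Prop :=
  ∀ᵐ ζ ∂(torusMeasure n),
    Tendsto (fun r : ℝ => F fun j => (r : ℂ) * bpt (ζ j)) (𝓝[<] 1) (𝓝 (φ ζ))


/-!
Since `x ⊥ H²`, `∫ x ζ̄ᵏ = 0` for every `k ≥ 0`. On the circle,
`ζ̄ⁿ K_ξ - ξ̄ⁿ K_ξ = ∑_{i<n} ξ̄^{n-1-i} ζ̄^{i+1}` is a polynomial in `ζ̄` without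
constant term, so `⟨e_n, x K_ξ⟩ = ξ̄ⁿ ∫ x K_ξ`. The geometric series `K_ξ = ∑ ξ̄ᵐ eₘ`
converges uniformly, so `K_ξ ∈ H²` and `⟨e_n, K_ξ⟩ = ξ̄ⁿ`; hence
`x K_ξ - (∫ x K_ξ) K_ξ ⊥ H²`. Finally `P_ξ = K_ξ + conj K_ξ - 1`, and both
`∫ x conj K_ξ = ⟨K_ξ, x⟩` and `∫ x` vanish, so `x̃(ξ) = ∫ x P_ξ = ∫ x K_ξ`.
-/

end HardyPolydisc

open scoped ComplexConjugate InnerProductSpace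

lemma MeasureTheory.Integrable.continuous_mul {X : Type*} [TopologicalSpace X]
    [CompactSpace X] [MeasurableSpace X] [OpensMeasurableSpace X] {μ : Measure X} {f g : X → ℂ}
    (hf : Integrable f μ) (hg : Continuous g) : Integrable (fun x => g x * f x) μ := by
  obtain ⟨C, hC⟩ := isCompact_univ.exists_bound_of_continuousOn hg.continuousOn
  exact hf.bdd_mul hg.aestronglyMeasurable (ae_of_all _ fun x => hC x trivial)

lemma ContinuousMap.toLp_mk {α E : Type*} [MeasurableSpace α] [TopologicalSpace α]
    [BorelSpace α] [CompactSpace α] [NormedAddCommGroup E] [SecondCountableTopologyEither α E]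
    {p : ℝ≥0∞} [Fact (1 ≤ p)] {μ : Measure α} [IsFiniteMeasure μ] (𝕜 : Type*) [NormedRing 𝕜]
    [Module 𝕜 E] [IsBoundedSMul 𝕜 E] {f : α → E} (hf : Continuous f) (hf' : MemLp f p μ) :
    ContinuousMap.toLp p μ 𝕜 ⟨f, hf⟩ = hf'.toLp f :=
  Lp.ext ((ContinuousMap.coeFn_toLp μ _).trans hf'.coeFn_toLp.symm)

namespace Complex

variable {ξ w : ℂ}

lemma one_sub_conj_mul_ne_zero (hξ : ‖ξ‖ < 1) (hw : ‖w‖ = 1) : 1 - conj ξ * w ≠ 0 := by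
  intro h
  have := congrArg norm (sub_eq_zero.mp h)
  simp [hw] at this
  linarith

lemma conj_pow_mul_inv_one_sub_conj_mul (hw : ‖w‖ = 1) (h : 1 - conj ξ * w ≠ 0) (n : ℕ) :
    conj w ^ n * (1 - conj ξ * w)⁻¹ = conj ξ ^ n * (1 - conj ξ * w)⁻¹
      + ∑ i ∈ Finset.range n, conj ξ ^ (n - 1 - i) * conj w ^ (i + 1) := by
  have hww : conj w * w = 1 := by rw [conj_mul', hw]; norm_num
  have hfactor : conj w - conj ξ = conj w * (1 - conj ξ * w) := by
    linear_combination conj ξ * hww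
  have key : conj w ^ n - conj ξ ^ n
      = (∑ i ∈ Finset.range n, conj ξ ^ (n - 1 - i) * conj w ^ (i + 1)) * (1 - conj ξ * w) := by
    rw [← geom_sum₂_mul, hfactor, Finset.sum_mul, Finset.sum_mul]
    exact Finset.sum_congr rfl fun i _ => by ring
  field_simp
  linear_combination key

lemma ofReal_poissonKernel_eq (hw : ‖w‖ = 1) (h : 1 - conj ξ * w ≠ 0) :
    (((1 - ‖ξ‖ ^ 2) / ‖1 - ξ * conj w‖ ^ 2 : ℝ) : ℂ)
      = (1 - conj ξ * w)⁻¹ + conj (1 - conj ξ * w)⁻¹ - 1 := by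
  have hww : w * conj w = 1 := by rw [mul_conj', hw]; norm_num
  have hconj : conj (1 - conj ξ * w) = 1 - ξ * conj w := by simp
  have h' : 1 - ξ * conj w ≠ 0 := by rw [← hconj]; exact (map_ne_zero _).2 h
  rw [map_inv₀, hconj]
  push_cast
  rw [← mul_conj', ← mul_conj', map_sub, map_one, map_mul, conj_conj]
  field_simp
  linear_combination (ξ * conj ξ) * hww

end Complex

namespace HardyPolydisc

lemma norm_bpt (t : AddCircle (1 : ℝ)) : ‖bpt t‖ = 1 := by
  simp [bpt, Circle.norm_coe]

@[fun_prop]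
lemma continuous_bpt : Continuous bpt :=
  continuous_subtype_val.comp AddCircle.continuous_toCircle

lemma bpt_pow_eq_fourier (n : ℕ) (t : AddCircle (1 : ℝ)) : bpt t ^ n = fourier n t := by
  simp [bpt, fourier_apply, AddCircle.toCircle_nsmul]

lemma integral_bpt_pow_mul_conj_bpt_pow (a b : ℕ) :
    ∫ t, bpt t ^ b * conj (bpt t ^ a) = if a = b then 1 else 0 := by
  have := orthonormal_iff_ite.mp (orthonormal_fourier (T := 1)) a b
  rw [ContinuousMap.inner_toLp] at this
  simpa [bpt_pow_eq_fourier, AddCircle.volume_eq_smul_haarAddCircle] using this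

lemma integrable_coeFn {n : ℕ} (x : L2T n) :
    Integrable (x : Torus n → ℂ) (torusMeasure n) :=
  (Lp.memLp x).integrable one_le_two

section Monomials

variable {n : ℕ}

@[fun_prop]
lemma continuous_mon (k : Fin n → ℕ) : Continuous (mon k) := by
  unfold mon; fun_prop

def monLp (k : Fin n → ℕ) : L2T n := (mon_memℒp k).toLp (mon k)

lemma isClosed_hardy (n : ℕ) : IsClosed (hardy n : Set (L2T n)) :=
  Submodule.isClosed_topologicalClosure _

lemma monLp_mem_hardy (k : Fin n → ℕ) : monLp k ∈ hardy n :=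
  Submodule.le_topologicalClosure _ (Submodule.subset_span ⟨k, rfl⟩)

lemma inner_monLp (k : Fin n → ℕ) (f : L2T n) :
    ⟪monLp k, f⟫_ℂ = ∫ ζ, conj (mon k ζ) * f ζ ∂torusMeasure n := by
  rw [L2.inner_def]
  refine integral_congr_ae ?_
  filter_upwards [(mon_memℒp k).coeFn_toLp] with ζ hζ
  rw [RCLike.inner_apply, monLp, hζ, mul_comm]

lemma inner_monLp_toLp (k : Fin n → ℕ) {g : Torus n → ℂ} (hg : MemLp g 2 (torusMeasure n)) :
    ⟪monLp k, hg.toLp g⟫_ℂ = ∫ ζ, conj (mon k ζ) * g ζ ∂torusMeasure n := by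
  rw [inner_monLp]
  refine integral_congr_ae ?_
  filter_upwards [hg.coeFn_toLp] with ζ hζ
  rw [hζ]

lemma mem_orthogonal_hardy_iff (v : L2T n) :
    v ∈ (hardy n)ᗮ ↔ ∀ k, ⟪monLp k, v⟫_ℂ = 0 := by
  rw [hardy, Submodule.orthogonal_closure, Submodule.mem_orthogonal]
  refine ⟨fun h k => h _ (Submodule.subset_span ⟨k, rfl⟩), fun h u hu => ?_⟩
  induction hu using Submodule.span_induction with
  | mem _ hk => obtain ⟨k, rfl⟩ := hk; exact h k
  | zero => exact inner_zero_left v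
  | add _ _ _ _ h₁ h₂ => rw [inner_add_left, h₁, h₂, add_zero]
  | smul _ _ _ h' => rw [inner_smul_left, h', mul_zero]

end Monomials

lemma mon_fin_one (k : Fin 1 → ℕ) (ζ : Torus 1) : mon k ζ = bpt (ζ 0) ^ k 0 := by
  simp [mon]

lemma integral_torus_one (F : AddCircle (1 : ℝ) → ℂ) :
    ∫ ζ : Torus 1, F (ζ 0) ∂torusMeasure 1 = ∫ t, F t :=
  (volume_preserving_funUnique (Fin 1) (AddCircle (1 : ℝ))).integral_comp
    (MeasurableEquiv.measurableEmbedding _) F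

lemma inner_monLp_monLp (k : Fin 1 → ℕ) (m : ℕ) :
    ⟪monLp k, monLp (fun _ : Fin 1 => m)⟫_ℂ = if k 0 = m then 1 else 0 := by
  refine (inner_monLp_toLp k (mon_memℒp _)).trans ?_
  simp_rw [mon_fin_one, mul_comm]
  exact (integral_torus_one fun t => bpt t ^ m * conj (bpt t ^ k 0)).trans
    (integral_bpt_pow_mul_conj_bpt_pow _ _)

lemma integral_conj_pow_mul_eq_zero {x : L2T 1} (hx : x ∈ (hardy 1)ᗮ) (m : ℕ) :
    ∫ ζ, conj (bpt (ζ 0)) ^ m * x ζ ∂torusMeasure 1 = 0 := by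
  simpa [inner_monLp, mon_fin_one] using (mem_orthogonal_hardy_iff x).1 hx fun _ => m

section SzegoKernel

variable {ξ : ℂ}

def szegoKernel (ξ : ℂ) (ζ : Torus 1) : ℂ := (1 - conj ξ * bpt (ζ 0))⁻¹

lemma continuous_szegoKernel (hξ : ‖ξ‖ < 1) : Continuous (szegoKernel ξ) :=
  Continuous.inv₀ (by fun_prop) fun ζ => Complex.one_sub_conj_mul_ne_zero hξ (norm_bpt _)

lemma memLp_szegoKernel (hξ : ‖ξ‖ < 1) : MemLp (szegoKernel ξ) 2 (torusMeasure 1) :=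
  ContinuousMap.memLp (μ := torusMeasure 1) ℂ ⟨_, continuous_szegoKernel hξ⟩

lemma hasSum_szegoKernel (hξ : ‖ξ‖ < 1) :
    HasSum (fun m : ℕ => conj ξ ^ m • monLp (fun _ : Fin 1 => m))
      ((memLp_szegoKernel hξ).toLp (szegoKernel ξ)) := by
  set g : ℕ → C(Torus 1, ℂ) := fun m => conj ξ ^ m • ⟨mon (fun _ => m), continuous_mon _⟩
  have hg (m : ℕ) : ‖g m‖ ≤ ‖ξ‖ ^ m :=
    (ContinuousMap.norm_le _ (by positivity)).2 fun ζ => by simp [g, mon_fin_one, norm_bpt]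
  have hsum : Summable g :=
    Summable.of_norm_bounded (summable_geometric_of_lt_one (norm_nonneg _) hξ) hg
  have htsum : ∑' m, g m = ⟨szegoKernel ξ, continuous_szegoKernel hξ⟩ := by
    ext ζ
    rw [← ContinuousMap.tsum_apply hsum]
    simp only [g, ContinuousMap.smul_apply, ContinuousMap.coe_mk, mon_fin_one, smul_eq_mul,
      ← mul_pow]
    exact tsum_geometric_of_norm_lt_one (by simpa [norm_bpt] using hξ)
  have := (ContinuousMap.toLp 2 (torusMeasure 1) ℂ).hasSum (htsum ▸ hsum.hasSum)
  simpa only [g, monLp, map_smul, ContinuousMap.toLp_mk ℂ _ (mon_memℒp _),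
    ContinuousMap.toLp_mk ℂ _ (memLp_szegoKernel hξ)] using this

lemma szegoKernel_mem_hardy (hξ : ‖ξ‖ < 1) :
    (memLp_szegoKernel hξ).toLp (szegoKernel ξ) ∈ hardy 1 :=
  (isClosed_hardy 1).mem_of_tendsto (hasSum_szegoKernel hξ).tendsto_sum_nat
    (Eventually.of_forall fun _ => Submodule.sum_mem _ fun _ _ =>
      Submodule.smul_mem _ _ (monLp_mem_hardy _))

lemma inner_monLp_szegoKernel (hξ : ‖ξ‖ < 1) (k : Fin 1 → ℕ) :
    ⟪monLp k, (memLp_szegoKernel hξ).toLp (szegoKernel ξ)⟫_ℂ = conj ξ ^ k 0 := by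
  have := (hasSum_szegoKernel hξ).mapL (innerSL ℂ (monLp k))
  simp only [innerSL_apply_apply, inner_smul_right, inner_monLp_monLp] at this
  rw [this.unique (hasSum_single (k 0) fun m hm => by simp [Ne.symm hm])]
  simp

lemma poisson_eq_szegoKernel_add_conj (hξ : ‖ξ‖ < 1) (ζ : Torus 1) :
    (poisson (fun _ => ξ) ζ : ℂ) = szegoKernel ξ ζ + conj (szegoKernel ξ ζ) - 1 := by
  simpa [poisson, szegoKernel] using
    Complex.ofReal_poissonKernel_eq (norm_bpt (ζ 0))
      (Complex.one_sub_conj_mul_ne_zero hξ (norm_bpt _))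

variable {x : L2T 1}

lemma integrable_mul_szegoKernel (hξ : ‖ξ‖ < 1) :
    Integrable (fun ζ => x ζ * szegoKernel ξ ζ) (torusMeasure 1) := by
  simpa only [mul_comm] using (integrable_coeFn x).continuous_mul (continuous_szegoKernel hξ)

lemma integral_conj_pow_mul_mul_szegoKernel (hx : x ∈ (hardy 1)ᗮ) (hξ : ‖ξ‖ < 1) (n : ℕ) :
    ∫ ζ, conj (bpt (ζ 0)) ^ n * (x ζ * szegoKernel ξ ζ) ∂torusMeasure 1
      = conj ξ ^ n * ∫ ζ, x ζ * szegoKernel ξ ζ ∂torusMeasure 1 := by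
  have hpow (i : ℕ) : Integrable (fun ζ => conj (bpt (ζ 0)) ^ i * x ζ) (torusMeasure 1) :=
    (integrable_coeFn x).continuous_mul (by fun_prop)
  calc _ = ∫ ζ, conj ξ ^ n * (x ζ * szegoKernel ξ ζ)
        + ∑ i ∈ Finset.range n, conj ξ ^ (n - 1 - i) * (conj (bpt (ζ 0)) ^ (i + 1) * x ζ)
          ∂torusMeasure 1 := by
        refine integral_congr_ae (ae_of_all _ fun ζ => ?_)
        have := Complex.conj_pow_mul_inv_one_sub_conj_mul (norm_bpt (ζ 0))
          (Complex.one_sub_conj_mul_ne_zero hξ (norm_bpt _)) n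
        simp_rw [szegoKernel, ← mul_assoc, ← Finset.sum_mul]
        linear_combination x ζ * this
    _ = conj ξ ^ n * (∫ ζ, x ζ * szegoKernel ξ ζ ∂torusMeasure 1)
        + ∑ i ∈ Finset.range n, conj ξ ^ (n - 1 - i)
          * ∫ ζ, conj (bpt (ζ 0)) ^ (i + 1) * x ζ ∂torusMeasure 1 := by
        rw [integral_add ((integrable_mul_szegoKernel hξ).const_mul _)
            (integrable_finsetSum _ fun i _ => (hpow _).const_mul _),
          integral_const_mul, integral_finsetSum _ fun i _ => (hpow _).const_mul _]
        simp_rw [integral_const_mul]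
    _ = _ := by simp [integral_conj_pow_mul_eq_zero hx]

lemma integral_mul_poisson_eq (hx : x ∈ (hardy 1)ᗮ) (hξ : ‖ξ‖ < 1) :
    ∫ ζ, x ζ * (poisson (fun _ => ξ) ζ : ℂ) ∂torusMeasure 1
      = ∫ ζ, x ζ * szegoKernel ξ ζ ∂torusMeasure 1 := by
  have hxK := integrable_mul_szegoKernel (x := x) hξ
  have hxK' : Integrable (fun ζ => x ζ * conj (szegoKernel ξ ζ)) (torusMeasure 1) := by
    simpa only [mul_comm] using (integrable_coeFn x).continuous_mul
      (g := fun ζ => conj (szegoKernel ξ ζ))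
      (Complex.continuous_conj.comp (continuous_szegoKernel hξ))
  have h_conj : ∫ ζ, x ζ * conj (szegoKernel ξ ζ) ∂torusMeasure 1 = 0 := by
    rw [← (Submodule.mem_orthogonal _ x).1 hx _ (szegoKernel_mem_hardy hξ), L2.inner_def]
    refine integral_congr_ae ?_
    filter_upwards [(memLp_szegoKernel hξ).coeFn_toLp] with ζ hζ
    rw [RCLike.inner_apply, hζ, mul_comm]
  have h_mean : ∫ ζ, x ζ ∂torusMeasure 1 = 0 := by
    simpa using integral_conj_pow_mul_eq_zero hx 0
  have hsum : Integrable (fun ζ => x ζ * szegoKernel ξ ζ + x ζ * conj (szegoKernel ξ ζ))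
      (torusMeasure 1) := hxK.add hxK'
  calc _ = ∫ ζ, (x ζ * szegoKernel ξ ζ + x ζ * conj (szegoKernel ξ ζ)) - x ζ
          ∂torusMeasure 1 := by
        refine integral_congr_ae (ae_of_all _ fun ζ => ?_)
        dsimp only
        rw [poisson_eq_szegoKernel_add_conj hξ]
        ring
    _ = _ := by
        rw [integral_sub hsum (integrable_coeFn x), integral_add hxK hxK', h_conj, h_mean,
          add_zero, sub_zero]

end SzegoKernel

/-- If `x ⊥ H²(𝔻)` then `P_{H²(𝔻)}(x K_ξ) = x̃(ξ) K_ξ`, where `x̃` is the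
Poisson extension of `x` and `K_ξ` the (unnormalized) Szegő kernel. -/
theorem proj_mul_szegoKernel_of_mem_orthogonal {x : L2T 1}
    (hx : x ∈ (hardy 1)ᗮ) {ξ : ℂ} (hξ : ‖ξ‖ < 1)
    (K : Torus 1 → ℂ) (hKdef : K = fun ζ => 1 / (1 - (starRingEnd ℂ) ξ * bpt (ζ 0)))
    (hK : MemLp K 2 (torusMeasure 1))
    (hxK : MemLp (fun ζ => (x : Torus 1 → ℂ) ζ * K ζ) 2 (torusMeasure 1)) :
    (Submodule.orthogonalProjectionOnto (hardy 1) (hxK.toLp _) : L2T 1)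
      = (∫ ζ, (x : Torus 1 → ℂ) ζ * (poisson (fun _ => ξ) ζ : ℂ) ∂(torusMeasure 1))
          • hK.toLp K := by
  obtain rfl : K = szegoKernel ξ := by
    rw [hKdef]; funext ζ; rw [one_div, szegoKernel]
  rw [integral_mul_poisson_eq hx hξ, ← Submodule.starProjection_apply]
  refine Submodule.eq_starProjection_of_mem_orthogonal
    (Submodule.smul_mem _ _ (szegoKernel_mem_hardy hξ))
    ((mem_orthogonal_hardy_iff _).2 fun k => ?_)
  rw [inner_sub_right, inner_smul_right, inner_monLp_szegoKernel hξ, inner_monLp_toLp]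
  simp_rw [mon_fin_one, map_pow]
  rw [integral_conj_pow_mul_mul_szegoKernel hx hξ]
  ring

end HardyPolydisc
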